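/- Purified distance to a projected state: for a subnormalized state ρ (positive semidefinite, 0 < tr ρ ≤ 1) and a positive semidefinite operator Π ≤ 1, the purified distance satisfies P(ρ, ΠρΠ) ≤ √((tr ρ)² − (tr(Π²ρ))²) / √(tr ρ). -/

import Mathlib

open Matrix
open scoped ComplexOrder Classical

noncomputable section

/-- PSD square root (junk value 0 if not PSD). -/
def psdSqrt {n : Type*} [Fintype n] [DecidableEq n] (A : Matrix n n ℂ) : Matrix n n ℂ :=
  if h : A.PosSemidef then
    (h.1.eigenvectorUnitary : Matrix n n ℂ) * diagonal ((↑) ∘ (Real.sqrt ·) ∘ h.1.eigenvalues) *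
      (star h.1.eigenvectorUnitary : Matrix n n ℂ)
  else 0

/-- trace norm `‖A‖₁ = tr √(A Aᴴ)`. -/
def trNorm {n : Type*} [Fintype n] [DecidableEq n] (A : Matrix n n ℂ) : ℝ :=
  ((psdSqrt (A * A.conjTranspose)).trace).re

/-- generalized fidelity `F̄(ρ,σ) = ‖√ρ√σ‖₁ + √((1 − tr ρ)(1 − tr σ))`
on subnormalized states. -/
def genFid {n : Type*} [Fintype n] [DecidableEq n] (A B : Matrix n n ℂ) : ℝ :=
  trNorm (psdSqrt A * psdSqrt B) +
    Real.sqrt ((1 - A.trace.re) * (1 - B.trace.re))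

/-- purified distance `P(ρ,σ) = √(1 − F̄(ρ,σ)²)`. -/
def purDist {n : Type*} [Fintype n] [DecidableEq n] (A B : Matrix n n ℂ) : ℝ :=
  Real.sqrt (1 - (genFid A B) ^ 2)

/-!
Write `t = tr ρ`, `a = tr(Pρ)`, `s = tr(P²ρ)`. For `X = √ρ √(PρP)` one has
`X Xᴴ = (√ρ P √ρ)²` with `√ρ P √ρ ≥ 0`, so `‖X‖₁ = tr(√ρ P √ρ) = a` and
`F̄(ρ, PρP) = a + √((1 - t)(1 - s))` exactly. The rest is scalar: `P² ≤ P ≤ 1` gives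
`s ≤ a ≤ t`, and with `√((1 - t)(1 - s)) ≥ 1 - t` this yields
`1 - F̄² ≤ (t - s)(1 + s) ≤ (t² - s²)/t`, the last step because `t ≤ 1`.
-/

section
open scoped MatrixOrder

section
variable {𝕜 n : Type*} [RCLike 𝕜] [Fintype n] [DecidableEq n]

lemma Matrix.PosSemidef.trace_mul_nonneg {A B : Matrix n n 𝕜}
    (hA : A.PosSemidef) (hB : B.PosSemidef) : 0 ≤ (A * B).trace := by
  have hAB : A * B = CFC.sqrt A * (CFC.sqrt A * B) := by
    rw [← mul_assoc, CFC.sqrt_mul_sqrt_self A hA.nonneg]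
  rw [hAB, trace_mul_comm]
  exact (conjugate_nonneg_of_nonneg hB.nonneg (CFC.sqrt_nonneg A)).posSemidef.trace_nonneg

lemma Matrix.trace_mul_le_trace_mul_of_le {A B C : Matrix n n 𝕜}
    (hAB : A ≤ B) (hC : C.PosSemidef) : (A * C).trace ≤ (B * C).trace := by
  rw [← sub_nonneg, ← trace_sub, ← sub_mul]
  exact (sub_nonneg.2 hAB).posSemidef.trace_mul_nonneg hC

end

variable {n : Type*} [Fintype n] [DecidableEq n]

lemma psdSqrt_eq_cfcSqrt {A : Matrix n n ℂ} (hA : A.PosSemidef) : psdSqrt A = CFC.sqrt A := by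
  rw [psdSqrt, dif_pos hA, CFC.sqrt_eq_cfc, cfc_nnreal_eq_real _ A, hA.1.cfc_eq, IsHermitian.cfc,
    Unitary.conjStarAlgAut_apply]
  congr 3
  funext i
  simp [Real.coe_sqrt, Real.coe_toNNReal', max_eq_left (hA.eigenvalues_nonneg i)]

lemma psdSqrt_mul_self {A : Matrix n n ℂ} (hA : A.PosSemidef) : psdSqrt (A * A) = A := by
  rw [psdSqrt_eq_cfcSqrt hA.isHermitian.isSelfAdjoint.mul_self_nonneg.posSemidef,
    CFC.sqrt_mul_self A hA.nonneg]

lemma trNorm_psdSqrt_mul_psdSqrt_conj {ρ P : Matrix n n ℂ} (hρ : ρ.PosSemidef)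
    (hP : P.PosSemidef) : trNorm (psdSqrt ρ * psdSqrt (P * ρ * P)) = (P * ρ).trace.re := by
  have hσ : 0 ≤ P * ρ * P := conjugate_nonneg_of_nonneg hρ.nonneg hP.nonneg
  set R := CFC.sqrt ρ
  set S := CFC.sqrt (P * ρ * P)
  have hR : 0 ≤ R := CFC.sqrt_nonneg ρ
  have hRR : R * R = ρ := CFC.sqrt_mul_sqrt_self ρ hρ.nonneg
  have hSS : S * S = P * ρ * P := CFC.sqrt_mul_sqrt_self _ hσ
  have hsquare : R * S * (R * S)ᴴ = R * P * R * (R * P * R) := by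
    rw [conjTranspose_mul, (CFC.sqrt_nonneg _).posSemidef.1, hR.posSemidef.1]
    calc R * S * (S * R) = R * (S * S) * R := by simp only [mul_assoc]
      _ = R * P * R * (R * P * R) := by rw [hSS, ← hRR]; simp only [mul_assoc]
  rw [trNorm, psdSqrt_eq_cfcSqrt hρ, psdSqrt_eq_cfcSqrt hσ.posSemidef, hsquare,
    psdSqrt_mul_self (conjugate_nonneg_of_nonneg hP.nonneg hR).posSemidef,
    trace_mul_cycle, hRR, trace_mul_comm]

lemma one_sub_sq_add_sqrt_le {s a t : ℝ} (hs : 0 ≤ s) (hsa : s ≤ a) (hat : a ≤ t)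
    (ht : 0 < t) (ht1 : t ≤ 1) :
    1 - (a + √((1 - t) * (1 - s))) ^ 2 ≤ (t ^ 2 - s ^ 2) / t := by
  set r := √((1 - t) * (1 - s))
  have hr : 1 - t ≤ r := by
    calc 1 - t = √((1 - t) * (1 - t)) := (Real.sqrt_mul_self (by linarith)).symm
      _ ≤ r := Real.sqrt_le_sqrt (mul_le_mul_of_nonneg_left (by linarith) (by linarith))
  have hr2 : r ^ 2 = (1 - t) * (1 - s) := Real.sq_sqrt (mul_nonneg (by linarith) (by linarith))
  have hlow : (t - s) * (1 + s) ≤ (t ^ 2 - s ^ 2) / t := by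
    rw [le_div_iff₀ ht]
    nlinarith [mul_nonneg (sub_nonneg.2 (hsa.trans hat)) (mul_nonneg hs (sub_nonneg.2 ht1))]
  have hsq : s ^ 2 + 2 * s * (1 - t) + (1 - t) * (1 - s) ≤ (a + r) ^ 2 := by
    nlinarith [mul_le_mul_of_nonneg_left hr hs, Real.sqrt_nonneg ((1 - t) * (1 - s))]
  linarith

end

/-- Purified distance to a projected state: for a subnormalized state `ρ` with
`0 < tr ρ ≤ 1` and `0 ≤ P ≤ 1`,
`P(ρ, PρP) ≤ √((tr ρ)² − (tr(P²ρ))²) / √(tr ρ)`. -/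
theorem purDist_projection_bound {n : Type*} [Fintype n] [DecidableEq n]
    (ρ P : Matrix n n ℂ)
    (hρ : ρ.PosSemidef) (hρpos : 0 < ρ.trace.re) (hρtr : ρ.trace.re ≤ 1)
    (hP : P.PosSemidef) (hP1 : ((1 : Matrix n n ℂ) - P).PosSemidef) :
    purDist ρ (P * ρ * P) ≤
      Real.sqrt ((ρ.trace.re) ^ 2 - (((P * P * ρ).trace).re) ^ 2)
        / Real.sqrt (ρ.trace.re) := by
  open scoped MatrixOrder in
  have hPle : P ≤ 1 := hP1
  have hPP : P * P ≤ P := by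
    open scoped Matrix.Norms.L2Operator in
    simpa only [sq, pow_one] using CStarAlgebra.pow_antitone hP.nonneg hPle one_le_two
  have hs : 0 ≤ (P * P * ρ).trace.re :=
    hP.isHermitian.isSelfAdjoint.mul_self_nonneg.posSemidef.trace_mul_nonneg hρ |>.1
  have hsa : (P * P * ρ).trace.re ≤ (P * ρ).trace.re := (trace_mul_le_trace_mul_of_le hPP hρ).1
  have hat : (P * ρ).trace.re ≤ ρ.trace.re := by
    simpa only [one_mul] using (trace_mul_le_trace_mul_of_le hPle hρ).1
  have hgenFid : genFid ρ (P * ρ * P) =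
      (P * ρ).trace.re + √((1 - ρ.trace.re) * (1 - (P * P * ρ).trace.re)) := by
    rw [genFid, trNorm_psdSqrt_mul_psdSqrt_conj hρ hP, trace_mul_cycle P ρ P]
  rw [purDist, hgenFid, ← Real.sqrt_div' _ hρpos.le]
  exact Real.sqrt_le_sqrt (one_sub_sq_add_sqrt_le hs hsa hat hρpos hρtr)
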